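/- arXiv:2110.10618 — 6 statements merged into one kernel-verified Lean document; each statement's English description precedes it below -/
import Mathlib

section
/- For a numerical semigroup S with atoms n_1 < ... < n_k and gcd 1, min Δ(S) = gcd(n_2 - n_1, n_3 - n_2, ..., n_k - n_{k-1}). -/
open Finset

namespace LengthDensity

/-- The set of factorizations of `n` with respect to generators `g`. -/
def facs {k : ℕ} (g : Fin k → ℕ) (n : ℕ) : Set (Fin k → ℕ) :=
  {z | ∑ i, z i * g i = n}

/-- Membership in the numerical semigroup generated by `g`. -/
def mem {k : ℕ} (g : Fin k → ℕ) (n : ℕ) : Prop := (facs g n).Nonempty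

/-- The set of factorization lengths of `n`. -/
def lengthSet {k : ℕ} (g : Fin k → ℕ) (n : ℕ) : Set ℕ :=
  (fun z => ∑ i, z i) '' facs g n

/-- Length density of an element. -/
noncomputable def LD {k : ℕ} (g : Fin k → ℕ) (n : ℕ) : ℝ :=
  (((lengthSet g n).ncard : ℝ) - 1) /
    (((sSup (lengthSet g n) : ℕ) : ℝ) - ((sInf (lengthSet g n) : ℕ) : ℝ))

/-- Length density of the semigroup: infimum of `LD` over elements with
non-singleton length set. -/
noncomputable def LDsgp {k : ℕ} (g : Fin k → ℕ) : ℝ :=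
  sInf {x : ℝ | ∃ n : ℕ, 2 ≤ (lengthSet g n).ncard ∧ x = LD g n}

/-- The delta set (successive gaps) of a set of naturals. -/
def deltaOf (L : Set ℕ) : Set ℕ :=
  {d | ∃ a ∈ L, ∃ b ∈ L, a < b ∧ (∀ c ∈ L, ¬(a < c ∧ c < b)) ∧ d = b - a}

/-- The delta set of an element. -/
def delta {k : ℕ} (g : Fin k → ℕ) (n : ℕ) : Set ℕ := deltaOf (lengthSet g n)

/-- The delta set of the semigroup. -/
def Delta {k : ℕ} (g : Fin k → ℕ) : Set ℕ := ⋃ n : ℕ, delta g n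

/-- Adjacency in the factorization graph of `n`: two factorizations of `n`
sharing a positive coordinate. -/
def adj {k : ℕ} (g : Fin k → ℕ) (n : ℕ) (z z' : Fin k → ℕ) : Prop :=
  z ∈ facs g n ∧ z' ∈ facs g n ∧ ∃ i, 0 < z i ∧ 0 < z' i

/-- `n` is a Betti element: its factorization graph is disconnected. -/
def IsBetti {k : ℕ} (g : Fin k → ℕ) (n : ℕ) : Prop :=
  ∃ z ∈ facs g n, ∃ z' ∈ facs g n, ¬ Relation.ReflTransGen (adj g n) z z'

/-- The semigroup is tasty: `LD(S) > 1 / max Δ(S)`. -/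
def Tasty {k : ℕ} (g : Fin k → ℕ) : Prop := LDsgp g > 1 / ((sSup (Delta g) : ℕ) : ℝ)

/-- The semigroup is bland: `LD(S) = 1 / max Δ(S)`. -/
def Bland {k : ℕ} (g : Fin k → ℕ) : Prop := LDsgp g = 1 / ((sSup (Delta g) : ℕ) : ℝ)

/-- `g` is a minimal generating set: no generator is a nonnegative integer
combination of the others. -/
def IsMinGen {k : ℕ} (g : Fin k → ℕ) : Prop :=
  ∀ i, ¬ ∃ z : Fin k → ℕ, z i = 0 ∧ ∑ j, z j * g j = g i

/-- `n` is a non-atom of the semigroup generated by `g`: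
it is a sum of two nonzero elements. -/
def NonAtom {k : ℕ} (g : Fin k → ℕ) (n : ℕ) : Prop :=
  ∃ a b : ℕ, 0 < a ∧ 0 < b ∧ mem g a ∧ mem g b ∧ n = a + b

/-! Let `d` be the gcd of the consecutive differences. All generators are congruent to `g 0`
modulo `d`, and `g 0` is coprime to `d`, so `n ≡ ℓ * g 0 [MOD d]` forces any two factorization
lengths of `n` to be congruent modulo `d`: every element of `Δ(S)` is a positive multiple of `d`.
Conversely Bézout writes `d` as the coordinate sum of an integer relation `∑ v j * g j = 0`;
the positive and negative parts of `v` are two factorizations of one element whose lengths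
differ by exactly `d`, and these lengths are then adjacent. -/

lemma modEq_zero_of_succ_modEq_castSucc {k d : ℕ} {f : Fin (k + 1) → ℕ}
    (h : ∀ i : Fin k, f i.succ ≡ f i.castSucc [MOD d]) (j : Fin (k + 1)) :
    f j ≡ f 0 [MOD d] := by
  induction j using Fin.induction with
  | zero => rfl
  | succ i ih => exact (h i).trans ih

lemma coprime_of_gcd_eq_one_of_modEq {ι : Type*} {s : Finset ι} {g : ι → ℕ} {a d : ℕ}
    (hgcd : s.gcd g = 1) (hg : ∀ i ∈ s, g i ≡ a [MOD d]) : a.Coprime d :=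
  Nat.dvd_one.mp <| hgcd ▸ Finset.dvd_gcd fun i hi =>
    ((hg i hi).dvd_iff (Nat.gcd_dvd_right a d)).mpr (Nat.gcd_dvd_left a d)

section Lengths

variable {k d a n : ℕ} {g : Fin k → ℕ}

lemma modEq_length_mul_of_mem_lengthSet {ℓ : ℕ} (hg : ∀ j, g j ≡ a [MOD d])
    (hℓ : ℓ ∈ lengthSet g n) : n ≡ ℓ * a [MOD d] := by
  obtain ⟨z, hz, rfl⟩ := hℓ
  rw [← hz, ← ZMod.natCast_eq_natCast_iff]
  push_cast
  rw [Finset.sum_mul]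
  exact Finset.sum_congr rfl fun j _ => by rw [(ZMod.natCast_eq_natCast_iff _ _ _).mpr (hg j)]

lemma modEq_of_mem_lengthSet {ℓ ℓ' : ℕ} (hg : ∀ j, g j ≡ a [MOD d]) (ha : a.Coprime d)
    (hℓ : ℓ ∈ lengthSet g n) (hℓ' : ℓ' ∈ lengthSet g n) : ℓ ≡ ℓ' [MOD d] :=
  Nat.ModEq.cancel_right_of_coprime (Nat.coprime_comm.mp ha) <|
    (modEq_length_mul_of_mem_lengthSet hg hℓ).symm.trans
      (modEq_length_mul_of_mem_lengthSet hg hℓ')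

end Lengths

section DeltaOf

variable {L : Set ℕ} {d : ℕ}

lemma dvd_of_mem_deltaOf {x : ℕ} (hL : ∀ a ∈ L, ∀ b ∈ L, a ≡ b [MOD d])
    (hx : x ∈ deltaOf L) : d ∣ x ∧ 0 < x := by
  obtain ⟨a, ha, b, hb, hab, -, rfl⟩ := hx
  exact ⟨(Nat.modEq_iff_dvd' hab.le).mp (hL a ha b hb), Nat.sub_pos_of_lt hab⟩

lemma mem_deltaOf_of_add_mem {a : ℕ} (hL : ∀ a ∈ L, ∀ b ∈ L, a ≡ b [MOD d]) (hd : 0 < d)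
    (ha : a ∈ L) (had : a + d ∈ L) : d ∈ deltaOf L := by
  refine ⟨a, ha, a + d, had, by omega, fun c hc ⟨hac, hcd⟩ => ?_, by omega⟩
  have := Nat.le_of_dvd (by omega) ((Nat.modEq_iff_dvd' hac.le).mp (hL a ha c hc))
  omega

end DeltaOf

def relationLengths {k : ℕ} (g : Fin k → ℕ) : AddSubgroup ℤ where
  carrier := {m | ∃ v : Fin k → ℤ, ∑ j, v j * g j = 0 ∧ ∑ j, v j = m}
  zero_mem' := ⟨0, by simp, by simp⟩
  add_mem' := by
    rintro _ _ ⟨v, hv, rfl⟩ ⟨w, hw, rfl⟩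
    exact ⟨v + w, by simp [add_mul, Finset.sum_add_distrib, hv, hw], by
      simp [Finset.sum_add_distrib]⟩
  neg_mem' := by
    rintro _ ⟨v, hv, rfl⟩
    exact ⟨-v, by simp [hv], by simp⟩

lemma natCast_sub_mem_relationLengths {k : ℕ} (g : Fin k → ℕ) (i j : Fin k) :
    (g j : ℤ) - g i ∈ relationLengths g :=
  ⟨fun l => (if l = i then (g j : ℤ) else 0) - (if l = j then (g i : ℤ) else 0), by
    simp [sub_mul, ite_mul, Finset.sum_sub_distrib]; ring, by
    simp [Finset.sum_sub_distrib]⟩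

lemma natCast_finsetGcd_mem {ι : Type*} (H : AddSubgroup ℤ) (s : Finset ι) (f : ι → ℕ)
    (h : ∀ i ∈ s, (f i : ℤ) ∈ H) : ((s.gcd f : ℕ) : ℤ) ∈ H := by
  classical
  induction s using Finset.induction_on with
  | empty => simp
  | insert i s hi ih =>
    rw [Finset.forall_mem_insert] at h
    rw [Finset.gcd_insert]
    change ((Nat.gcd (f i) (s.gcd f) : ℕ) : ℤ) ∈ H
    rw [Nat.gcd_eq_gcd_ab, mul_comm, mul_comm ((s.gcd f : ℕ) : ℤ)]
    exact H.add_mem (H.zsmul_mem h.1 _) (H.zsmul_mem (ih h.2) _)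

lemma exists_add_mem_lengthSet {k m : ℕ} {g : Fin k → ℕ}
    (hm : (m : ℤ) ∈ relationLengths g) :
    ∃ n ℓ, ℓ ∈ lengthSet g n ∧ ℓ + m ∈ lengthSet g n := by
  obtain ⟨v, hv, hvm⟩ := hm
  have hsplit : ∀ j, ((v j).toNat : ℤ) = ((-v j).toNat : ℕ) + v j := fun j => by
    linarith [Int.toNat_sub_toNat_neg (v j)]
  refine ⟨∑ j, (-v j).toNat * g j, ∑ j, (-v j).toNat, ⟨_, rfl, rfl⟩,
    fun j => (v j).toNat, ?_, ?_⟩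
  · show ∑ j, (v j).toNat * g j = ∑ j, (-v j).toNat * g j
    zify
    simp only [hsplit, add_mul, Finset.sum_add_distrib, hv, add_zero]
  · show ∑ j, (v j).toNat = ∑ j, (-v j).toNat + m
    zify
    simp only [hsplit, Finset.sum_add_distrib, hvm]

theorem stmt0_general (k : ℕ) (g : Fin (k + 1) → ℕ)
    (hmono : StrictMono g)
    (hgcd : Finset.univ.gcd g = 1) :
    sInf (Delta g) =
      Finset.univ.gcd (fun i : Fin k => g i.succ - g i.castSucc) := by
  set d := Finset.univ.gcd (fun i : Fin k => g i.succ - g i.castSucc)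
  have hstep : ∀ i : Fin k, g i.castSucc ≤ g i.succ := fun i => (hmono Fin.castSucc_lt_succ).le
  have hg : ∀ j, g j ≡ g 0 [MOD d] := modEq_zero_of_succ_modEq_castSucc fun i =>
    ((Nat.modEq_iff_dvd' (hstep i)).mpr
      (Finset.gcd_dvd (f := fun i : Fin k => g i.succ - g i.castSucc) (Finset.mem_univ i))).symm
  have hcop : (g 0).Coprime d := coprime_of_gcd_eq_one_of_modEq hgcd fun j _ => hg j
  have hL : ∀ n, ∀ a ∈ lengthSet g n, ∀ b ∈ lengthSet g n, a ≡ b [MOD d] :=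
    fun n a ha b hb => modEq_of_mem_lengthSet hg hcop ha hb
  have hΔ : ∀ x ∈ Delta g, d ∣ x ∧ 0 < x := fun x hx => by
    obtain ⟨n, hn⟩ := Set.mem_iUnion.mp hx
    exact dvd_of_mem_deltaOf (hL n) hn
  rcases Nat.eq_zero_or_pos d with hd | hd
  · rw [hd, Nat.sInf_eq_zero]
    refine .inr (Set.eq_empty_of_forall_notMem fun x hx => ?_)
    obtain ⟨hdx, hx⟩ := hΔ x hx
    rw [hd, zero_dvd_iff] at hdx
    omega
  · have hrel : (d : ℤ) ∈ relationLengths g := natCast_finsetGcd_mem _ _ _ fun i _ => by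
      rw [Nat.cast_sub (hstep i)]
      exact natCast_sub_mem_relationLengths g _ _
    obtain ⟨n, ℓ, hℓ, hℓd⟩ := exists_add_mem_lengthSet hrel
    have hmem : d ∈ Delta g :=
      Set.mem_iUnion.mpr ⟨n, mem_deltaOf_of_add_mem (hL n) hd hℓ hℓd⟩
    exact IsLeast.csInf_eq ⟨hmem, fun x hx => Nat.le_of_dvd (hΔ x hx).2 (hΔ x hx).1⟩

theorem stmt0 (k : ℕ) (hk : 1 ≤ k) (g : Fin (k + 1) → ℕ)
    (hmono : StrictMono g) (hpos : 0 < g 0)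
    (hgcd : Finset.univ.gcd g = 1) (hmin : IsMinGen g) :
    sInf (Delta g) =
      Finset.univ.gcd (fun i : Fin k => g i.succ - g i.castSucc) :=
  stmt0_general k g hmono hgcd
end LengthDensity
end

section
/- For a numerical semigroup S, if |Δ(S)| > 1 then LD(S) < 1/min Δ(S). -/
open Finset

namespace LengthDensity

lemma facs_finite {k : ℕ} (g : Fin k → ℕ) (hpos : ∀ i, 0 < g i) (n : ℕ) :
    (facs g n).Finite := by
  have hsub : facs g n ⊆ Set.pi Set.univ (fun _ : Fin k => Set.Iic n) := by
    intro z hz i _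
    have hz' : ∑ i, z i * g i = n := hz
    have h1 : z i * g i ≤ n := by
      rw [← hz']
      exact Finset.single_le_sum (f := fun j => z j * g j) (fun j _ => Nat.zero_le _) (Finset.mem_univ i)
    calc z i ≤ z i * g i := Nat.le_mul_of_pos_right _ (hpos i)
      _ ≤ n := h1
  exact (Set.Finite.pi (fun _ => Set.finite_Iic n)).subset hsub

lemma lengthSet_finite {k : ℕ} (g : Fin k → ℕ) (hpos : ∀ i, 0 < g i) (n : ℕ) :
    (lengthSet g n).Finite :=
  (facs_finite g hpos n).image _

lemma sSup_eq_max' {S : Set ℕ} (hfin : S.Finite) (hne : S.Nonempty) :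
    sSup S = hfin.toFinset.max' (by simpa using hne) := by
  apply le_antisymm
  · exact Finset.le_max' _ _ (by simpa using Nat.sSup_mem hne hfin.bddAbove)
  · exact le_csSup hfin.bddAbove (by simpa using hfin.toFinset.max'_mem (by simpa using hne))

lemma sInf_eq_min' {S : Set ℕ} (hfin : S.Finite) (hne : S.Nonempty) :
    sInf S = hfin.toFinset.min' (by simpa using hne) := by
  apply le_antisymm
  · exact csInf_le (OrderBot.bddBelow S) (by simpa using hfin.toFinset.min'_mem (by simpa using hne))
  · exact Finset.min'_le _ _ (by simpa using Nat.sInf_mem hne)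

lemma deltaOf_erase_min_subset (L : Finset ℕ) (h : L.Nonempty) :
    deltaOf ↑(L.erase (L.min' h)) ⊆ deltaOf (↑L : Set ℕ) := by
  rintro x ⟨a, ha, b, hb, hab, hcons, rfl⟩
  simp only [Finset.mem_coe, Finset.mem_erase] at ha hb
  refine ⟨a, ha.2, b, hb.2, hab, ?_, rfl⟩
  intro c hc hbet
  have hm : L.min' h ≤ a := Finset.min'_le _ _ ha.2
  have hcne : c ≠ L.min' h := by omega
  exact hcons c (by simp [Finset.mem_erase, hcne, hc]) hbet

lemma min_gap_mem (L : Finset ℕ) (h : L.Nonempty) (h2 : 1 < L.card)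
    (hL' : (L.erase (L.min' h)).Nonempty) :
    (L.erase (L.min' h)).min' hL' - L.min' h ∈ deltaOf (↑L : Set ℕ) := by
  set m := L.min' h
  set m' := (L.erase m).min' hL'
  have hm'L : m' ∈ L := Finset.mem_of_mem_erase ((L.erase m).min'_mem hL')
  have hm'ne : m' ≠ m := Finset.ne_of_mem_erase ((L.erase m).min'_mem hL')
  have hmm' : m < m' := lt_of_le_of_ne (Finset.min'_le _ _ hm'L) (Ne.symm hm'ne)
  refine ⟨m, by simpa using L.min'_mem h, m', by simpa using hm'L, hmm', ?_, rfl⟩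
  intro c hc ⟨h1, h2'⟩
  have hcm : c ≠ m := by omega
  have : m' ≤ c := Finset.min'_le _ _ (Finset.mem_erase.mpr ⟨hcm, hc⟩)
  omega

lemma gap_sum_le (d : ℕ) : ∀ N : ℕ, ∀ L : Finset ℕ, L.card ≤ N →
    ∀ h : L.Nonempty, (∀ x ∈ deltaOf (↑L : Set ℕ), d ≤ x) →
    d * (L.card - 1) + L.min' h ≤ L.max' h := by
  intro N
  induction N with
  | zero =>
    intro L hL h _
    have : L.card ≠ 0 := Finset.card_ne_zero_of_mem (L.min'_mem h)
    omega
  | succ N ih =>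
    intro L hL h hall
    by_cases h2 : L.card ≤ 1
    · have : L.card = 1 := by
        have : L.card ≠ 0 := Finset.card_ne_zero_of_mem (L.min'_mem h)
        omega
      simp only [this]
      simpa using L.min'_le _ (L.max'_mem h)
    · push_neg at h2
      set m := L.min' h with hm
      have hL'ne : (L.erase m).Nonempty := by
        rw [← Finset.card_pos, Finset.card_erase_of_mem (L.min'_mem h)]; omega
      set m' := (L.erase m).min' hL'ne with hm'
      have hm'L : m' ∈ L := Finset.mem_of_mem_erase ((L.erase m).min'_mem hL'ne)
      have hm'ne : m' ≠ m := Finset.ne_of_mem_erase ((L.erase m).min'_mem hL'ne)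
      have hmm' : m < m' := lt_of_le_of_ne (Finset.min'_le _ _ hm'L) (Ne.symm hm'ne)
      have hdm : d ≤ m' - m := hall _ (min_gap_mem L h h2 hL'ne)
      have hcard : (L.erase m).card = L.card - 1 :=
        Finset.card_erase_of_mem (L.min'_mem h)
      have hIH := ih (L.erase m) (by omega) hL'ne
        (fun x hx => hall x (deltaOf_erase_min_subset L h hx))
      have hmaxmem : L.max' h ∈ L.erase m := by
        refine Finset.mem_erase.mpr ⟨?_, L.max'_mem h⟩
        have := Finset.le_max' L m' hm'L
        omega
      have hmaxeq : (L.erase m).max' hL'ne = L.max' h :=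
        le_antisymm (Finset.max'_le _ _ _ (fun x hx => Finset.le_max' _ _ (Finset.mem_of_mem_erase hx)))
          (Finset.le_max' _ _ hmaxmem)
      rw [hmaxeq, hcard] at hIH
      have hc2 : 2 ≤ L.card := h2
      have hsplit : d * (L.card - 1) = d * (L.card - 1 - 1) + d := by
        obtain ⟨c, hc⟩ : ∃ c, L.card - 1 = c + 1 := ⟨L.card - 2, by omega⟩
        rw [hc]
        simp [Nat.mul_succ]
      omega

lemma gap_sum_lt (d : ℕ) : ∀ N : ℕ, ∀ L : Finset ℕ, L.card ≤ N →
    ∀ h : L.Nonempty, (∀ x ∈ deltaOf (↑L : Set ℕ), d ≤ x) →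
    (∃ x ∈ deltaOf (↑L : Set ℕ), d < x) →
    d * (L.card - 1) + L.min' h < L.max' h := by
  intro N
  induction N with
  | zero =>
    intro L hL h _
    have : L.card ≠ 0 := Finset.card_ne_zero_of_mem (L.min'_mem h)
    omega
  | succ N ih =>
    intro L hL h hall hex
    obtain ⟨x, ⟨a, ha, b, hb, hab, hcons, rfl⟩, hdx⟩ := hex
    simp only [Finset.mem_coe] at ha hb
    have h2 : 1 < L.card := Finset.one_lt_card.mpr ⟨a, ha, b, hb, ne_of_lt hab⟩
    set m := L.min' h with hm
    have hL'ne : (L.erase m).Nonempty := by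
      rw [← Finset.card_pos, Finset.card_erase_of_mem (L.min'_mem h)]; omega
    set m' := (L.erase m).min' hL'ne with hm'
    have hm'L : m' ∈ L := Finset.mem_of_mem_erase ((L.erase m).min'_mem hL'ne)
    have hm'ne : m' ≠ m := Finset.ne_of_mem_erase ((L.erase m).min'_mem hL'ne)
    have hmm' : m < m' := lt_of_le_of_ne (Finset.min'_le _ _ hm'L) (Ne.symm hm'ne)
    have hdm : d ≤ m' - m := hall _ (min_gap_mem L h h2 hL'ne)
    have hcard : (L.erase m).card = L.card - 1 :=
      Finset.card_erase_of_mem (L.min'_mem h)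
    have hmaxmem : L.max' h ∈ L.erase m := by
      refine Finset.mem_erase.mpr ⟨?_, L.max'_mem h⟩
      have := Finset.le_max' L m' hm'L
      omega
    have hmaxeq : (L.erase m).max' hL'ne = L.max' h :=
      le_antisymm (Finset.max'_le _ _ _ (fun x hx => Finset.le_max' _ _ (Finset.mem_of_mem_erase hx)))
        (Finset.le_max' _ _ hmaxmem)
    have hsplit : d * (L.card - 1) = d * (L.card - 1 - 1) + d := by
      obtain ⟨c, hc⟩ : ∃ c, L.card - 1 = c + 1 := ⟨L.card - 2, by omega⟩
      rw [hc]
      simp [Nat.mul_succ]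
    by_cases ham : a = m
    · -- then b = m', and the big gap is m' - m
      have hbm' : b = m' := by
        have hbL' : b ∈ L.erase m := Finset.mem_erase.mpr ⟨by omega, hb⟩
        have h1 : m' ≤ b := Finset.min'_le _ _ hbL'
        have h2' : ¬ (a < m' ∧ m' < b) := hcons m' (by simpa using hm'L)
        omega
      have hIH := gap_sum_le d N (L.erase m) (by omega) hL'ne
        (fun x hx => hall x (deltaOf_erase_min_subset L h hx))
      rw [hmaxeq, hcard] at hIH
      have : d < m' - m := by rw [← ham, ← hbm']; omega
      omega
    · -- the big gap survives in L.erase m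
      have haL' : a ∈ L.erase m := by
        refine Finset.mem_erase.mpr ⟨ham, ha⟩
      have hbL' : b ∈ L.erase m := by
        have : m ≤ a := Finset.min'_le _ _ ha
        exact Finset.mem_erase.mpr ⟨by omega, hb⟩
      have hmemd : b - a ∈ deltaOf (↑(L.erase m) : Set ℕ) := by
        refine ⟨a, Finset.mem_coe.mpr haL', b, Finset.mem_coe.mpr hbL', hab, ?_, rfl⟩
        intro c hc hbet
        exact hcons c (Finset.mem_coe.mpr (Finset.mem_of_mem_erase (Finset.mem_coe.mp hc))) hbet
      have hIH := ih (L.erase m) (by omega) hL'ne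
        (fun x hx => hall x (deltaOf_erase_min_subset L h hx))
        ⟨b - a, hmemd, hdx⟩
      rw [hmaxeq, hcard] at hIH
      omega

theorem stmt2 (k : ℕ) (g : Fin k → ℕ) (hpos : ∀ i, 0 < g i)
    (hgcd : Finset.univ.gcd g = 1) (hmin : IsMinGen g)
    (hne : ∃ n : ℕ, 2 ≤ (lengthSet g n).ncard)
    (hcard : 1 < (Delta g).ncard) :
    LDsgp g < 1 / ((sInf (Delta g) : ℕ) : ℝ) := by
  clear hgcd hmin hne
  set d := sInf (Delta g) with hd
  -- Delta g is finite with at least two elements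
  have hDfin : (Delta g).Finite := by
    by_contra hinf
    rw [Set.Infinite.ncard hinf] at hcard
    omega
  have hDtwo : ∃ a ∈ Delta g, ∃ b ∈ Delta g, a ≠ b := by
    have := hcard
    rw [Set.ncard_eq_toFinset_card _ hDfin] at this
    obtain ⟨a, ha, b, hb, hab⟩ := Finset.one_lt_card.mp this
    exact ⟨a, by simpa using ha, b, by simpa using hb, hab⟩
  obtain ⟨a₀, ha₀, b₀, hb₀, hab₀⟩ := hDtwo
  have hDne : (Delta g).Nonempty := ⟨a₀, ha₀⟩
  have hdmem : d ∈ Delta g := Nat.sInf_mem hDne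
  have hdle : ∀ x ∈ Delta g, d ≤ x := fun x hx => Nat.sInf_le hx
  -- d is positive
  have hdpos : 0 < d := by
    obtain ⟨_, ⟨n₀, rfl⟩, x, hx, y, hy, hxy, _, hdxy⟩ := hdmem
    omega
  -- get d' ∈ Delta g with d < d'
  have hd' : ∃ d' ∈ Delta g, d < d' := by
    by_cases h : a₀ = d
    · exact ⟨b₀, hb₀, lt_of_le_of_ne (hdle b₀ hb₀) (by omega)⟩
    · exact ⟨a₀, ha₀, lt_of_le_of_ne (hdle a₀ ha₀) (Ne.symm h)⟩
  obtain ⟨d', hd'mem, hdd'⟩ := hd'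
  obtain ⟨_, ⟨n, rfl⟩, hd'n⟩ := hd'mem
  -- work with the length set of n
  have hfin : (lengthSet g n).Finite := lengthSet_finite g hpos n
  set L := hfin.toFinset with hL
  have hLcoe : (↑L : Set ℕ) = lengthSet g n := hfin.coe_toFinset
  obtain ⟨a, haL, b, hbL, hab, hcons, rfl⟩ := hd'n
  have hLne : L.Nonempty := ⟨a, by simp [hL, haL]⟩
  have hcard2 : 1 < L.card :=
    Finset.one_lt_card.mpr ⟨a, by simp [hL, haL], b, by simp [hL, hbL], ne_of_lt hab⟩
  have hall : ∀ x ∈ deltaOf (↑L : Set ℕ), d ≤ x := by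
    rw [hLcoe]
    exact fun x hx => hdle x (Set.mem_iUnion.mpr ⟨n, hx⟩)
  have hex : ∃ x ∈ deltaOf (↑L : Set ℕ), d < x := by
    refine ⟨b - a, ?_, hdd'⟩
    rw [hLcoe]
    exact ⟨a, haL, b, hbL, hab, hcons, rfl⟩
  have hkey := gap_sum_lt d L.card L le_rfl hLne hall hex
  -- identify sSup, sInf, ncard
  have hSne : (lengthSet g n).Nonempty := ⟨a, haL⟩
  have hsup : sSup (lengthSet g n) = L.max' hLne := sSup_eq_max' hfin hSne
  have hinf' : sInf (lengthSet g n) = L.min' hLne := sInf_eq_min' hfin hSne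
  have hncard : (lengthSet g n).ncard = L.card := by
    rw [Set.ncard_eq_toFinset_card _ hfin]
  have hncard2 : 2 ≤ (lengthSet g n).ncard := by omega
  -- the set defining LDsgp is bounded below by 0
  have hbdd : BddBelow {x : ℝ | ∃ m : ℕ, 2 ≤ (lengthSet g m).ncard ∧ x = LD g m} := by
    refine ⟨0, ?_⟩
    rintro x ⟨m, hm, rfl⟩
    have hfinm : (lengthSet g m).Finite := lengthSet_finite g hpos m
    have hnem : (lengthSet g m).Nonempty := by
      apply Set.nonempty_of_ncard_ne_zero
      omega
    have hle : sInf (lengthSet g m) ≤ sSup (lengthSet g m) :=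
      le_csSup hfinm.bddAbove (Nat.sInf_mem hnem)
    apply div_nonneg
    · have : (1:ℝ) ≤ ((lengthSet g m).ncard : ℝ) := by exact_mod_cast (by omega : 1 ≤ _)
      linarith
    · have : ((sInf (lengthSet g m) : ℕ) : ℝ) ≤ ((sSup (lengthSet g m) : ℕ) : ℝ) := by
        exact_mod_cast hle
      linarith
  have hmemset : LD g n ∈ {x : ℝ | ∃ m : ℕ, 2 ≤ (lengthSet g m).ncard ∧ x = LD g m} :=
    ⟨n, hncard2, rfl⟩
  have hstep : LDsgp g ≤ LD g n := csInf_le hbdd hmemset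
  refine lt_of_le_of_lt hstep ?_
  -- final real arithmetic
  rw [LD, hsup, hinf', hncard]
  set C := L.card with hC
  set M := L.max' hLne with hM
  set mN := L.min' hLne with hmN
  have hkeyR : (d : ℝ) * ((C : ℝ) - 1) + (mN : ℝ) < (M : ℝ) := by
    have h1 : ((d * (C - 1) + mN : ℕ) : ℝ) < ((M : ℕ) : ℝ) := by exact_mod_cast hkey
    push_cast [Nat.cast_sub (show 1 ≤ C by omega)] at h1
    linarith
  have hd1 : (1:ℝ) ≤ (d:ℝ) := by exact_mod_cast hdpos
  have hC1 : (1:ℝ) ≤ (C:ℝ) - 1 := by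
    have : (2:ℝ) ≤ (C:ℝ) := by exact_mod_cast hcard2
    linarith
  have hden : (0:ℝ) < (M:ℝ) - (mN:ℝ) := by nlinarith
  have hdR : (0:ℝ) < (d:ℝ) := by linarith
  rw [div_lt_div_iff₀ hden hdR]
  nlinarith
end LengthDensity
end

section
/- Let S = ⟨s/t_1, ..., s/t_k⟩ where t_1 > t_2 > ... > t_k > 1 are pairwise coprime positive integers and s = t_1 t_2 ⋯ t_k. Then the length set of s in S is exactly {t_k, t_{k-1}, ..., t_1}. -/
open Finset

namespace LengthDensity

theorem stmt4 (k : ℕ) (hk : 1 ≤ k) (t : Fin (k + 1) → ℕ)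
    (hanti : StrictAnti t) (ht : ∀ i, 1 < t i)
    (hcop : ∀ i j, i ≠ j → Nat.Coprime (t i) (t j)) :
    lengthSet (fun i => (∏ j, t j) / t i) (∏ j, t j) = Set.range t := by
  set s := ∏ j, t j with hs_def
  have hpos : ∀ i, 0 < t i := fun i => lt_trans one_pos (ht i)
  have hspos : 0 < s := Finset.prod_pos (fun i _ => hpos i)
  have hdvd : ∀ i, t i ∣ s := fun i => Finset.dvd_prod_of_mem t (mem_univ i)
  have hdiv : ∀ i, s / t i * t i = s := fun i => Nat.div_mul_cancel (hdvd i)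
  have hquot : ∀ i, s / t i = ∏ j ∈ univ.erase i, t j := by
    intro i
    exact Nat.div_eq_of_eq_mul_left (hpos i) (Finset.prod_erase_mul univ t (mem_univ i)).symm
  have hcop' : ∀ i, Nat.Coprime (t i) (s / t i) := by
    intro i
    rw [hquot i]
    exact Nat.Coprime.prod_right fun j hj => hcop i j (Ne.symm (Finset.ne_of_mem_erase hj))
  ext L
  constructor
  · rintro ⟨z, hz, rfl⟩
    have hzc : ∀ i, t i ∣ z i := by
      intro i
      have hsum : ∑ j, z j * (s / t j) = s := hz
      have herase : t i ∣ ∑ j ∈ univ.erase i, z j * (s / t j) := by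
        refine Finset.dvd_sum fun j hj => ?_
        have hij : i ≠ j := Ne.symm (Finset.ne_of_mem_erase hj)
        have hdj : t i ∣ s / t j := by
          refine (hcop i j hij).dvd_of_dvd_mul_right ?_
          rw [hdiv j]
          exact hdvd i
        exact Dvd.dvd.mul_left hdj _
      have htot : t i ∣ z i * (s / t i) + ∑ j ∈ univ.erase i, z j * (s / t j) := by
        rw [Finset.add_sum_erase univ (fun j => z j * (s / t j)) (mem_univ i), hsum]
        exact hdvd i
      have : t i ∣ z i * (s / t i) := (Nat.dvd_add_right herase).mp (by rwa [add_comm] at htot)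
      exact (hcop' i).dvd_of_dvd_mul_right this
    set c : Fin (k+1) → ℕ := fun i => z i / t i with hc_def
    have hcz : ∀ i, z i = c i * t i := fun i => (Nat.div_mul_cancel (hzc i)).symm
    have hsumc : (∑ j, c j) * s = 1 * s := by
      rw [one_mul, Finset.sum_mul]
      calc ∑ j, c j * s = ∑ j, z j * (s / t j) := by
            refine Finset.sum_congr rfl fun j _ => ?_
            rw [hcz j, mul_assoc, mul_comm (t j), hdiv j]
          _ = s := hz
    have hone : ∑ j, c j = 1 := Nat.eq_of_mul_eq_mul_right hspos hsumc
    obtain ⟨i, _, hine⟩ : ∃ i ∈ univ, c i ≠ 0 := by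
      refine Finset.exists_ne_zero_of_sum_ne_zero ?_
      rw [hone]; exact one_ne_zero
    have hci : c i = 1 := by
      have hle : c i ≤ 1 := hone ▸ Finset.single_le_sum (fun j _ => Nat.zero_le _) (mem_univ i)
      omega
    have hzero : ∀ j, j ≠ i → c j = 0 := by
      intro j hj
      have := Finset.add_sum_erase univ c (mem_univ i)
      rw [hone, hci] at this
      have h0 : ∑ x ∈ univ.erase i, c x = 0 := by omega
      exact (Finset.sum_eq_zero_iff.mp h0) j (Finset.mem_erase.mpr ⟨hj, mem_univ j⟩)
    refine ⟨i, ?_⟩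
    have : ∑ j, z j = t i := by
      rw [show (∑ j, z j) = ∑ j, c j * t j from Finset.sum_congr rfl fun j _ => hcz j]
      rw [Finset.sum_eq_single i (fun j _ hj => by rw [hzero j hj, zero_mul])
        (fun h => absurd (mem_univ i) h), hci, one_mul]
    exact this.symm
  · rintro ⟨i, rfl⟩
    refine ⟨fun j => if j = i then t i else 0, ?_, ?_⟩
    · show (∑ j, (if j = i then t i else 0) * (s / t j)) = s
      rw [Finset.sum_eq_single i (fun j _ hj => by simp [hj]) (fun h => absurd (mem_univ i) h)]
      simp only [if_pos rfl]; rw [mul_comm]; exact hdiv i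
    · simp
end LengthDensity
end

section
/- Let S = ⟨s/t_1, ..., s/t_k⟩ with t_1 > ... > t_k > 1 pairwise coprime and s = t_1⋯t_k. Then for every n ∈ S with |L(n)| ≥ 2, LD(n) ≥ (k-1)/(t_1 - t_k), and consequently LD(S) = (k-1)/(t_1 - t_k). -/
/-!
Since `t_j ∣ s / t_i` for `i ≠ j` while `s / t_i` is a unit mod `t_i`, all factorizations `z` of
`n` have the same residues `z_i mod t_i`. Hence the factorizations of `n` are `r + t • a` for a
fixed `r` and all `a` of a fixed total `m`, and `L(n)` is a translate of
`T(m) = {∑ tᵢ aᵢ : ∑ aᵢ = m} ⊆ [m t_k, m t_1]` (`weightedSums t m`). As `T(m + 1)` contains the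
disjoint sets `T(m) + t_k` and `{m t_1 + t_i : i < k}`, we get `|T(m)| ≥ (k - 1) m + 1`, which
gives the bound. The Betti element `s` has `L(s) = T(1) = {t_1, …, t_k}`, where it is attained.
With `t` indexed by `Fin (k + 1)`, the paper's `k - 1` is `k` here.
-/

open Finset

namespace LengthDensity

section Supersymmetric

variable {k : ℕ} (t : Fin k → ℕ)

def supersymGens : Fin k → ℕ := fun i => (∏ j, t j) / t i

theorem supersymGens_mul_self (i : Fin k) : supersymGens t i * t i = ∏ j, t j :=
  Nat.div_mul_cancel (dvd_prod_of_mem t (mem_univ i))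

variable {t}

theorem supersymGens_eq_prod_erase (ht : ∀ i, 0 < t i) (i : Fin k) :
    supersymGens t i = ∏ j ∈ univ.erase i, t j := by
  rw [supersymGens, ← mul_prod_erase univ t (mem_univ i), Nat.mul_div_cancel_left _ (ht i)]

theorem dvd_supersymGens (ht : ∀ i, 0 < t i) {i j : Fin k} (hij : i ≠ j) :
    t i ∣ supersymGens t j := by
  rw [supersymGens_eq_prod_erase ht]
  exact dvd_prod_of_mem t (mem_erase.2 ⟨hij, mem_univ i⟩)

theorem coprime_supersymGens (ht : ∀ i, 0 < t i)
    (hcop : ∀ i j, i ≠ j → Nat.Coprime (t i) (t j)) (i : Fin k) :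
    Nat.Coprime (t i) (supersymGens t i) := by
  rw [supersymGens_eq_prod_erase ht]
  exact Nat.Coprime.prod_right fun j hj => hcop i j (mem_erase.1 hj).1.symm

theorem mul_supersymGens_modEq_of_mem_facs (ht : ∀ i, 0 < t i) {n : ℕ}
    {z : Fin k → ℕ} (hz : z ∈ facs (supersymGens t) n) (i : Fin k) :
    z i * supersymGens t i ≡ n [MOD t i] := by
  have hrest : t i ∣ ∑ j ∈ univ.erase i, z j * supersymGens t j :=
    dvd_sum fun j hj => dvd_mul_of_dvd_right (dvd_supersymGens ht (mem_erase.1 hj).1.symm) _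
  rw [← hz.out, ← add_sum_erase _ _ (mem_univ i)]
  exact (Nat.modEq_iff_dvd' (Nat.le_add_right _ _)).2 (by simpa using hrest)

theorem modEq_of_mem_facs (ht : ∀ i, 0 < t i) (hcop : ∀ i j, i ≠ j → Nat.Coprime (t i) (t j))
    {n : ℕ} {z z' : Fin k → ℕ} (hz : z ∈ facs (supersymGens t) n)
    (hz' : z' ∈ facs (supersymGens t) n) (i : Fin k) : z i ≡ z' i [MOD t i] :=
  Nat.ModEq.cancel_right_of_coprime (coprime_supersymGens ht hcop i)
    ((mul_supersymGens_modEq_of_mem_facs ht hz i).trans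
      (mul_supersymGens_modEq_of_mem_facs ht hz' i).symm)

theorem sum_add_mul_mul_supersymGens (r a : Fin k → ℕ) :
    ∑ i, (r i + t i * a i) * supersymGens t i
      = ∑ i, r i * supersymGens t i + (∏ j, t j) * ∑ i, a i := by
  rw [mul_sum, ← sum_add_distrib]
  refine sum_congr rfl fun i _ => ?_
  rw [← supersymGens_mul_self t i]
  ring

theorem facs_supersymGens (ht : ∀ i, 0 < t i) (hcop : ∀ i j, i ≠ j → Nat.Coprime (t i) (t j))
    {n : ℕ} {z₀ : Fin k → ℕ} (hz₀ : z₀ ∈ facs (supersymGens t) n) :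
    facs (supersymGens t) n = (fun (a : Fin k → ℕ) i => z₀ i % t i + t i * a i) ''
      {a | ∑ i, a i = ∑ i, z₀ i / t i} := by
  have hsplit : ∀ z : Fin k → ℕ, z ∈ facs (supersymGens t) n →
      n = ∑ i, z₀ i % t i * supersymGens t i + (∏ j, t j) * ∑ i, z i / t i := by
    intro z hz
    rw [← sum_add_mul_mul_supersymGens, ← hz.out]
    refine sum_congr rfl fun i _ => ?_
    rw [show z₀ i % t i = z i % t i from modEq_of_mem_facs ht hcop hz₀ hz i, Nat.mod_add_div]
  have hprod : 0 < ∏ j, t j := prod_pos fun j _ => ht j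
  ext z
  constructor
  · intro hz
    refine ⟨fun i => z i / t i, ?_, funext fun i => ?_⟩
    · exact (Nat.eq_of_mul_eq_mul_left hprod
        (Nat.add_left_cancel ((hsplit z hz).symm.trans (hsplit z₀ hz₀))))
    · change z₀ i % t i + t i * (z i / t i) = z i
      rw [show z₀ i % t i = z i % t i from modEq_of_mem_facs ht hcop hz₀ hz i, Nat.mod_add_div]
  · rintro ⟨a, ha, rfl⟩
    change ∑ i, (z₀ i % t i + t i * a i) * supersymGens t i = n
    rw [sum_add_mul_mul_supersymGens, (ha : _ = _), hsplit z₀ hz₀]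

variable (t)

def weightedSums (m : ℕ) : Set ℕ :=
  (fun a : Fin k → ℕ => ∑ i, t i * a i) '' {a | ∑ i, a i = m}

variable {t}

theorem lengthSet_supersymGens (ht : ∀ i, 0 < t i)
    (hcop : ∀ i j, i ≠ j → Nat.Coprime (t i) (t j)) {n : ℕ} {z₀ : Fin k → ℕ}
    (hz₀ : z₀ ∈ facs (supersymGens t) n) :
    lengthSet (supersymGens t) n
      = (fun x => ∑ i, z₀ i % t i + x) '' weightedSums t (∑ i, z₀ i / t i) := by
  rw [lengthSet, facs_supersymGens ht hcop hz₀, weightedSums, Set.image_image, Set.image_image]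
  simp only [sum_add_distrib]

theorem mul_mem_weightedSums (m : ℕ) (j : Fin k) : t j * m ∈ weightedSums t m :=
  ⟨Pi.single j m, by simp, by simp [Pi.single_apply]⟩

theorem add_mem_weightedSums {m x : ℕ} (hx : x ∈ weightedSums t m) (j : Fin k) :
    x + t j ∈ weightedSums t (m + 1) := by
  obtain ⟨a, ha : ∑ i, a i = m, rfl⟩ := hx
  refine ⟨a + Pi.single j 1, ?_, ?_⟩
  · simp [sum_add_distrib, ha]
  · simp [mul_add, sum_add_distrib, Pi.single_apply]

theorem eq_single_of_sum_eq_one {ι : Type*} [Fintype ι] [DecidableEq ι] {a : ι → ℕ}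
    (ha : ∑ i, a i = 1) : ∃ j, a = Pi.single j 1 := by
  obtain ⟨j, -, hj⟩ := exists_ne_zero_of_sum_ne_zero (ha ▸ one_ne_zero : ∑ i, a i ≠ 0)
  have hsplit := add_sum_erase univ a (mem_univ j)
  have hrest : ∀ i ∈ univ.erase j, a i = 0 := sum_eq_zero_iff.1 (by omega)
  refine ⟨j, funext fun i => ?_⟩
  rcases eq_or_ne i j with rfl | hij
  · simp only [Pi.single_eq_same]; omega
  · rw [Pi.single_eq_of_ne hij, hrest i (mem_erase.2 ⟨hij, mem_univ i⟩)]

theorem weightedSums_one : weightedSums t 1 = Set.range t := by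
  refine subset_antisymm ?_ ?_
  · rintro _ ⟨a, ha, rfl⟩
    obtain ⟨j, rfl⟩ := eq_single_of_sum_eq_one ha
    exact ⟨j, by simp [Pi.single_apply]⟩
  · rintro _ ⟨j, rfl⟩
    simpa using mul_mem_weightedSums 1 j

end Supersymmetric

section Antitone

variable {k : ℕ} {t : Fin (k + 1) → ℕ}

theorem weightedSums_subset_Icc (hanti : Antitone t) (m : ℕ) :
    weightedSums t m ⊆ Set.Icc (m * t (Fin.last k)) (m * t 0) := by
  rintro _ ⟨a, ha, rfl⟩
  replace ha : ∑ i, a i = m := ha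
  constructor
  · calc m * t (Fin.last k) = ∑ i, t (Fin.last k) * a i := by rw [← mul_sum, ha, mul_comm]
      _ ≤ ∑ i, t i * a i := sum_le_sum fun i _ => Nat.mul_le_mul_right _ (hanti (Fin.le_last i))
  · calc ∑ i, t i * a i ≤ ∑ i, t 0 * a i :=
          sum_le_sum fun i _ => Nat.mul_le_mul_right _ (hanti (Fin.zero_le i))
      _ = m * t 0 := by rw [← mul_sum, ha, mul_comm]

theorem weightedSums_finite (hanti : Antitone t) (m : ℕ) : (weightedSums t m).Finite :=
  (Set.finite_Icc _ _).subset (weightedSums_subset_Icc hanti m)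

theorem le_ncard_weightedSums (hanti : StrictAnti t) (m : ℕ) :
    k * m + 1 ≤ (weightedSums t m).ncard := by
  induction m with
  | zero =>
    exact (Set.ncard_pos (weightedSums_finite hanti.antitone 0)).2
      ⟨_, mul_mem_weightedSums 0 0⟩
  | succ m ih =>
    set A := (· + t (Fin.last k)) '' weightedSums t m
    set B := Set.range fun i : Fin k => t 0 * m + t i.castSucc
    have hAB : A ∪ B ⊆ weightedSums t (m + 1) := by
      rintro _ (⟨x, hx, rfl⟩ | ⟨i, rfl⟩)
      · exact add_mem_weightedSums hx _
      · exact add_mem_weightedSums (mul_mem_weightedSums m 0) _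
    have hdisj : Disjoint A B := by
      rw [Set.disjoint_left]
      rintro _ ⟨x, hx, rfl⟩ ⟨i, hi⟩
      have hx0 := (weightedSums_subset_Icc hanti.antitone m hx).2
      have hlt := hanti (Fin.castSucc_lt_last i)
      simp only at hi
      linarith
    have hA : A.ncard = (weightedSums t m).ncard :=
      Set.ncard_image_of_injective _ (add_left_injective _)
    have hB : B.ncard = k := by
      rw [Set.ncard_range_of_injective, Nat.card_eq_fintype_card, Fintype.card_fin]
      exact fun i j hij => Fin.castSucc_injective k (hanti.injective (Nat.add_left_cancel hij))
    have hfin := weightedSums_finite hanti.antitone (m + 1)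
    have := Set.ncard_le_ncard hAB hfin
    rw [Set.ncard_union_eq hdisj (hfin.subset (Set.subset_union_left.trans hAB))
      (hfin.subset (Set.subset_union_right.trans hAB)), hA, hB] at this
    rw [Nat.mul_succ]
    omega

end Antitone

theorem div_le_ncard_sub_one_div {L : Set ℕ} {k m a b c : ℕ} (hab : a < b)
    (hL : L ⊆ Set.Icc (c + m * a) (c + m * b)) (hcard : k * m + 1 ≤ L.ncard)
    (h2 : 2 ≤ L.ncard) :
    (k : ℝ) / ((b : ℝ) - a) ≤ ((L.ncard : ℝ) - 1) / (((sSup L : ℕ) : ℝ) - ((sInf L : ℕ) : ℝ)) := by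
  have hfin : L.Finite := (Set.finite_Icc _ _).subset hL
  obtain ⟨x, hx, y, hy, hxy⟩ := (Set.one_lt_ncard hfin).1 h2
  have hne : L.Nonempty := ⟨x, hx⟩
  have hsup : sSup L ≤ c + m * b := csSup_le hne fun z hz => (hL hz).2
  have hinf : c + m * a ≤ sInf L := le_csInf hne fun z hz => (hL hz).1
  have hlt : sInf L < sSup L := by
    have := csInf_le (OrderBot.bddBelow L) hx
    have := csInf_le (OrderBot.bddBelow L) hy
    have := le_csSup hfin.bddAbove hx
    have := le_csSup hfin.bddAbove hy
    omega
  have hba : (0 : ℝ) < b - a := sub_pos.2 (by exact_mod_cast hab)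
  have hspread : ((sSup L : ℕ) : ℝ) - ((sInf L : ℕ) : ℝ) ≤ m * ((b : ℝ) - a) := by
    have h1 : ((sSup L : ℕ) : ℝ) ≤ c + m * b := by exact_mod_cast hsup
    have h2 : (c : ℝ) + m * a ≤ ((sInf L : ℕ) : ℝ) := by exact_mod_cast hinf
    linarith
  have hcard' : (k : ℝ) * m ≤ L.ncard - 1 := by
    have : ((k * m + 1 : ℕ) : ℝ) ≤ L.ncard := by exact_mod_cast hcard
    push_cast at this
    linarith
  rw [div_le_div_iff₀ hba (sub_pos.2 (by exact_mod_cast hlt))]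
  calc (k : ℝ) * (((sSup L : ℕ) : ℝ) - ((sInf L : ℕ) : ℝ)) ≤ k * (m * ((b : ℝ) - a)) :=
        mul_le_mul_of_nonneg_left hspread (Nat.cast_nonneg k)
    _ = (k * m) * ((b : ℝ) - a) := by ring
    _ ≤ ((L.ncard : ℝ) - 1) * ((b : ℝ) - a) := mul_le_mul_of_nonneg_right hcard' hba.le

section Main

variable {k : ℕ} {t : Fin (k + 1) → ℕ}

theorem div_le_LD_supersymGens (hk : 1 ≤ k) (hanti : StrictAnti t) (ht : ∀ i, 0 < t i)
    (hcop : ∀ i j, i ≠ j → Nat.Coprime (t i) (t j)) {n : ℕ}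
    (hn : 2 ≤ (lengthSet (supersymGens t) n).ncard) :
    (k : ℝ) / ((t 0 : ℝ) - (t (Fin.last k) : ℝ)) ≤ LD (supersymGens t) n := by
  obtain ⟨z₀, hz₀⟩ : (facs (supersymGens t) n).Nonempty := by
    by_contra h
    simp [lengthSet, Set.not_nonempty_iff_eq_empty.1 h] at hn
  have hL := lengthSet_supersymGens ht hcop hz₀
  set m := ∑ i, z₀ i / t i
  have hcard : (lengthSet (supersymGens t) n).ncard = (weightedSums t m).ncard := by
    rw [hL]
    exact Set.ncard_image_of_injective _ (add_right_injective _)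
  have hlast : t (Fin.last k) < t 0 :=
    hanti (Fin.lt_def.2 (by rw [Fin.val_last, Fin.val_zero]; omega))
  refine div_le_ncard_sub_one_div (m := m) (c := ∑ i, z₀ i % t i) hlast ?_
    (hcard ▸ le_ncard_weightedSums hanti m) hn
  rw [hL]
  rintro _ ⟨x, hx, rfl⟩
  have := weightedSums_subset_Icc hanti.antitone m hx
  exact ⟨Nat.add_le_add_left this.1 _, Nat.add_le_add_left this.2 _⟩

theorem lengthSet_supersymGens_prod (ht : ∀ i, 0 < t i)
    (hcop : ∀ i j, i ≠ j → Nat.Coprime (t i) (t j)) :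
    lengthSet (supersymGens t) (∏ j, t j) = Set.range t := by
  have hz₀ : (fun i => t i * (Pi.single 0 1 : Fin (k + 1) → ℕ) i) ∈
      facs (supersymGens t) (∏ j, t j) := by
    simpa [facs, Pi.single_apply, mul_comm] using supersymGens_mul_self t 0
  rw [lengthSet_supersymGens ht hcop hz₀, ← weightedSums_one]
  simp [Nat.mul_div_cancel_left _ (ht _)]

theorem ncard_range_of_strictAnti (hanti : StrictAnti t) : (Set.range t).ncard = k + 1 := by
  rw [Set.ncard_range_of_injective hanti.injective, Nat.card_eq_fintype_card, Fintype.card_fin]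

theorem LD_supersymGens_prod (hanti : StrictAnti t) (ht : ∀ i, 0 < t i)
    (hcop : ∀ i j, i ≠ j → Nat.Coprime (t i) (t j)) :
    LD (supersymGens t) (∏ j, t j) = (k : ℝ) / ((t 0 : ℝ) - (t (Fin.last k) : ℝ)) := by
  have hsup : sSup (Set.range t) = t 0 :=
    IsGreatest.csSup_eq ⟨⟨0, rfl⟩, by rintro _ ⟨i, rfl⟩; exact hanti.antitone (Fin.zero_le i)⟩
  have hinf : sInf (Set.range t) = t (Fin.last k) :=
    IsLeast.csInf_eq ⟨⟨_, rfl⟩, by rintro _ ⟨i, rfl⟩; exact hanti.antitone (Fin.le_last i)⟩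
  rw [LD, lengthSet_supersymGens_prod ht hcop, ncard_range_of_strictAnti hanti, hsup, hinf]
  push_cast
  ring

end Main

theorem stmt6 (k : ℕ) (hk : 1 ≤ k) (t : Fin (k + 1) → ℕ)
    (hanti : StrictAnti t) (ht : ∀ i, 1 < t i)
    (hcop : ∀ i j, i ≠ j → Nat.Coprime (t i) (t j)) :
    (∀ n : ℕ, 2 ≤ (lengthSet (fun i => (∏ j, t j) / t i) n).ncard →
        (k : ℝ) / ((t 0 : ℝ) - (t (Fin.last k) : ℝ)) ≤
          LD (fun i => (∏ j, t j) / t i) n) ∧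
      LDsgp (fun i => (∏ j, t j) / t i) =
        (k : ℝ) / ((t 0 : ℝ) - (t (Fin.last k) : ℝ)) := by
  have ht₀ : ∀ i, 0 < t i := fun i => Nat.zero_lt_of_lt (ht i)
  have hlower : ∀ n, 2 ≤ (lengthSet (supersymGens t) n).ncard →
      (k : ℝ) / ((t 0 : ℝ) - (t (Fin.last k) : ℝ)) ≤ LD (supersymGens t) n :=
    fun n hn => div_le_LD_supersymGens hk hanti ht₀ hcop hn
  have hcard : 2 ≤ (lengthSet (supersymGens t) (∏ j, t j)).ncard := by
    rw [lengthSet_supersymGens_prod ht₀ hcop, ncard_range_of_strictAnti hanti]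
    omega
  refine ⟨hlower, IsLeast.csInf_eq ⟨⟨_, hcard, (LD_supersymGens_prod hanti ht₀ hcop).symm⟩, ?_⟩⟩
  rintro _ ⟨n, hn, rfl⟩
  exact hlower n hn
end LengthDensity
end

section
/- For S = ⟨20, 28, 42, 73⟩, the element 202 has length set {4, 6, 7, 9}, and LD(202) = 3/5 is strictly smaller than LD(b) for every Betti element b of S (whose length sets are L(84) = {2,3}, L(140) = {4,5,7}, L(146) = {2,4,5}). -/
/-
Every element has finitely many factorizations, which can be enumerated by a terminating
computation; length sets and length densities of specific elements are read off from it.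
Betti elements are finite in number: `S` contains every integer from `208` on, so for
`n ≥ 354 = 208 + 2 · 73` and any generators `gᵢ, gⱼ` there is a factorization of `n` using both,
and through it any factorization using `gᵢ` is linked to any factorization using `gⱼ`. The
factorization graphs of the elements below `354` are checked one by one: apart from `84`, `140`
and `146`, each has a factorization sharing a generator with all others, while `84`, `140`, `146`
each have a factorization sharing a generator with no other one.
-/

open Finset

namespace LengthDensity

section Factorizations

variable {k : ℕ} {g : Fin k → ℕ} {n : ℕ}

theorem mem_facs {z : Fin k → ℕ} : z ∈ facs g n ↔ ∑ i, z i * g i = n := Iff.rfl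

theorem add_mem_facs {a b : ℕ} {z z' : Fin k → ℕ} (hz : z ∈ facs g a) (hz' : z' ∈ facs g b) :
    z + z' ∈ facs g (a + b) := by
  rw [mem_facs] at *
  simp only [Pi.add_apply, add_mul, Finset.sum_add_distrib, hz, hz']

theorem single_mem_facs (i : Fin k) : Pi.single i 1 ∈ facs g (g i) := by
  simp [mem_facs, Pi.single_apply]

theorem mem_generator (i : Fin k) : mem g (g i) := ⟨_, single_mem_facs i⟩

theorem mem_add {a b : ℕ} (ha : mem g a) (hb : mem g b) : mem g (a + b) :=
  let ⟨z, hz⟩ := ha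
  let ⟨z', hz'⟩ := hb
  ⟨z + z', add_mem_facs hz hz'⟩

theorem exists_pos_of_mem_facs (hn : 0 < n) {z : Fin k → ℕ} (hz : z ∈ facs g n) :
    ∃ i, 0 < z i := by
  obtain ⟨i, -, hi⟩ := Finset.exists_ne_zero_of_sum_ne_zero (mem_facs.1 hz ▸ hn.ne')
  exact ⟨i, Nat.pos_of_ne_zero (left_ne_zero_of_mul hi)⟩

theorem not_isBetti_iff : ¬ IsBetti g n ↔
    ∀ z ∈ facs g n, ∀ z' ∈ facs g n, Relation.ReflTransGen (adj g n) z z' := by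
  simp [IsBetti]

theorem not_isBetti_of_center {w : Fin k → ℕ} (hw : w ∈ facs g n)
    (h : ∀ z ∈ facs g n, (∃ i, 0 < z i ∧ 0 < w i) ∨ z = w) : ¬ IsBetti g n := by
  refine not_isBetti_iff.2 fun z hz z' hz' => .trans (b := w) ?_ ?_
  · obtain ⟨i, hi, hwi⟩ | rfl := h z hz
    exacts [.single ⟨hz, hw, i, hi, hwi⟩, .refl]
  · obtain ⟨i, hi, hwi⟩ | rfl := h z' hz'
    exacts [.single ⟨hw, hz', i, hwi, hi⟩, .refl]

/-- Two factorizations `z ∋ i` and `z' ∋ j` are both adjacent to `y + eᵢ + eⱼ`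
for any factorization `y` of `n - gᵢ - gⱼ`. -/
theorem not_isBetti_of_forall_mem_sub (hn : 0 < n)
    (h : ∀ i j, g i + g j ≤ n ∧ mem g (n - g i - g j)) : ¬ IsBetti g n := by
  refine not_isBetti_iff.2 fun z hz z' hz' => ?_
  obtain ⟨i, hi⟩ := exists_pos_of_mem_facs hn hz
  obtain ⟨j, hj⟩ := exists_pos_of_mem_facs hn hz'
  obtain ⟨hle, y, hy⟩ := h i j
  have hw : y + Pi.single i 1 + Pi.single j 1 ∈ facs g n := by
    have := add_mem_facs (add_mem_facs hy (single_mem_facs i)) (single_mem_facs j)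
    rwa [show n - g i - g j + g i + g j = n by omega] at this
  exact .tail (.single ⟨hz, hw, i, hi, by simp⟩) ⟨hw, hz', j, by simp, hj⟩

theorem isBetti_of_isolated {w v : Fin k → ℕ} (hw : w ∈ facs g n) (hv : v ∈ facs g n)
    (hvw : v ≠ w) (hiso : ∀ u ∈ facs g n, (∃ i, 0 < w i ∧ 0 < u i) → u = w) :
    IsBetti g n := by
  have reach : ∀ u, Relation.ReflTransGen (adj g n) w u → u = w := fun u hwu => by
    induction hwu with
    | refl => rfl
    | tail _ hadj ih =>
      obtain ⟨-, hu, hshare⟩ := hadj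
      exact hiso _ hu (ih ▸ hshare)
  exact ⟨w, hw, v, hv, fun hwv => hvw (reach v hwv)⟩

end Factorizations

-- Solving for the last coordinate instead of searching for it keeps the kernel evaluations
-- below cheap.
def facsList : {k : ℕ} → (Fin k → ℕ) → ℕ → List (Fin k → ℕ)
  | 0, _, n => if n = 0 then [Fin.elim0] else []
  | 1, g, n => if g 0 ∣ n then [fun _ => n / g 0] else []
  | _ + 2, g, n => (List.range (n / g 0 + 1)).flatMap fun a =>
      (facsList (Fin.tail g) (n - a * g 0)).map (Fin.cons a)

theorem mem_facsList {k : ℕ} {g : Fin k → ℕ} (hg : ∀ i, 0 < g i) {n : ℕ} {z : Fin k → ℕ} :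
    z ∈ facsList g n ↔ z ∈ facs g n := by
  induction g, n using facsList.induct with
  | case1 g => simpa [facsList, mem_facs] using Subsingleton.elim _ _
  | case2 n hn g => simp [facsList, mem_facs, hn, Ne.symm hn]
  | case3 n g hdvd =>
    simp only [facsList, hdvd, if_true, List.mem_singleton, mem_facs, Fin.sum_univ_one,
      funext_iff, Fin.forall_fin_one]
    exact (Nat.eq_div_iff_mul_eq_left (hg 0).ne' hdvd).trans eq_comm
  | case4 n g hndvd =>
    simp only [facsList, hndvd, if_false, List.not_mem_nil, mem_facs, Fin.sum_univ_one,
      false_iff]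
    exact fun h => hndvd (Dvd.intro_left _ h)
  | case5 k n g ih =>
    have ih' : ∀ a y, y ∈ facsList (Fin.tail g) (n - a * g 0) ↔
        y ∈ facs (Fin.tail g) (n - a * g 0) := fun a _ => ih a fun i => hg i.succ
    simp only [facsList, List.mem_flatMap, List.mem_range, List.mem_map, Nat.lt_succ_iff, ih',
      mem_facs]
    constructor
    · rintro ⟨a, ha, y, hy, rfl⟩
      have : a * g 0 ≤ n := (Nat.le_div_iff_mul_le (hg 0)).1 ha
      rw [Fin.sum_univ_succ]
      simp only [Fin.cons_zero, Fin.cons_succ]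
      rw [show ∑ i, y i * g i.succ = n - a * g 0 from hy]
      omega
    · intro hz
      rw [Fin.sum_univ_succ] at hz
      refine ⟨z 0, (Nat.le_div_iff_mul_le (hg 0)).2 (by omega), Fin.tail z, ?_,
        Fin.cons_self_tail z⟩
      change ∑ i : Fin (k + 1), z i.succ * g i.succ = n - z 0 * g 0
      omega

section Enumeration

variable {k : ℕ} {g : Fin k → ℕ} (hg : ∀ i, 0 < g i) {n : ℕ}
include hg

theorem lengthSet_eq_of_toFinset_eq {s : Finset ℕ}
    (h : ((facsList g n).map fun z => ∑ i, z i).toFinset = s) : lengthSet g n = ↑s := by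
  ext m
  simp [← h, lengthSet, mem_facsList hg]

theorem mem_iff_facsList_ne_nil : mem g n ↔ facsList g n ≠ [] :=
  ⟨fun ⟨_, hz⟩ => List.ne_nil_of_mem ((mem_facsList hg).2 hz), fun h =>
    let ⟨z, hz⟩ := List.exists_mem_of_ne_nil _ h
    ⟨z, (mem_facsList hg).1 hz⟩⟩

theorem isBetti_of_isolated_mem_facsList
    (h : ∃ w ∈ facsList g n, ∃ v ∈ facsList g n, v ≠ w ∧
      ∀ u ∈ facsList g n, (∃ i, 0 < w i ∧ 0 < u i) → u = w) : IsBetti g n := by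
  simp only [mem_facsList hg] at h
  obtain ⟨w, hw, v, hv, hvw, hiso⟩ := h
  exact isBetti_of_isolated hw hv hvw hiso

theorem not_isBetti_of_center_mem_facsList
    (h : facsList g n = [] ∨ ∃ w ∈ facsList g n,
      ∀ z ∈ facsList g n, (∃ i, 0 < z i ∧ 0 < w i) ∨ z = w) : ¬ IsBetti g n := by
  simp only [mem_facsList hg] at h
  obtain hnil | ⟨w, hw, hcenter⟩ := h
  · rintro ⟨z, hz, -⟩
    simp [← mem_facsList hg, hnil] at hz
  · exact not_isBetti_of_center hw hcenter

end Enumeration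

theorem LD_eq_of_lengthSet_eq_coe {k : ℕ} {g : Fin k → ℕ} {n : ℕ} {s : Finset ℕ}
    (hs : s.Nonempty) (h : lengthSet g n = ↑s) :
    LD g n = ((#s : ℝ) - 1) / ((s.max' hs : ℝ) - s.min' hs) := by
  rw [LD, h, Set.ncard_coe_finset, hs.csSup_eq_max', hs.csInf_eq_min']

local notation "𝒮" => (![20, 28, 42, 73] : Fin 4 → ℕ)

theorem gens_pos : ∀ i, 0 < 𝒮 i := by decide

theorem gens_le : ∀ i, 𝒮 i ≤ 73 := by decide

theorem lengthSet_202 : lengthSet 𝒮 202 = {4, 6, 7, 9} := by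
  simpa using lengthSet_eq_of_toFinset_eq gens_pos (s := {4, 6, 7, 9}) (by decide +kernel)

theorem lengthSet_84 : lengthSet 𝒮 84 = {2, 3} := by
  simpa using lengthSet_eq_of_toFinset_eq gens_pos (s := {2, 3}) (by decide +kernel)

theorem lengthSet_140 : lengthSet 𝒮 140 = {4, 5, 7} := by
  simpa using lengthSet_eq_of_toFinset_eq gens_pos (s := {4, 5, 7}) (by decide +kernel)

theorem lengthSet_146 : lengthSet 𝒮 146 = {2, 4, 5} := by
  simpa using lengthSet_eq_of_toFinset_eq gens_pos (s := {2, 4, 5}) (by decide +kernel)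

theorem LD_202 : LD 𝒮 202 = 3 / 5 := by
  rw [LD_eq_of_lengthSet_eq_coe (s := {4, 6, 7, 9}) (by decide) (by simpa using lengthSet_202)]
  norm_num

theorem LD_84 : LD 𝒮 84 = 1 := by
  rw [LD_eq_of_lengthSet_eq_coe (s := {2, 3}) (by decide) (by simpa using lengthSet_84)]
  norm_num

theorem LD_140 : LD 𝒮 140 = 2 / 3 := by
  rw [LD_eq_of_lengthSet_eq_coe (s := {4, 5, 7}) (by decide) (by simpa using lengthSet_140)]
  norm_num

theorem LD_146 : LD 𝒮 146 = 2 / 3 := by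
  rw [LD_eq_of_lengthSet_eq_coe (s := {2, 4, 5}) (by decide) (by simpa using lengthSet_146)]
  norm_num

theorem mem_of_208_le {m : ℕ} (hm : 208 ≤ m) : mem 𝒮 m := by
  induction m using Nat.strong_induction_on with
  | _ m ih =>
    by_cases hm' : m < 228
    · have base : ∀ r < 20, facsList 𝒮 (208 + r) ≠ [] := by decide +kernel
      rw [mem_iff_facsList_ne_nil gens_pos, show m = 208 + (m - 208) by omega]
      exact base _ (by omega)
    · have := mem_add (ih (m - 20) (by omega) (by omega)) (mem_generator (g := 𝒮) 0)
      rwa [show m - 20 + 𝒮 0 = m by simp; omega] at this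

theorem not_isBetti_of_354_le {n : ℕ} (hn : 354 ≤ n) : ¬ IsBetti 𝒮 n :=
  not_isBetti_of_forall_mem_sub (by omega) fun i j =>
    have := gens_le i
    have := gens_le j
    ⟨by omega, mem_of_208_le (by omega)⟩

theorem eq_of_isBetti_of_lt_354 {n : ℕ} (hn : n < 354) (hb : IsBetti 𝒮 n) :
    n = 84 ∨ n = 140 ∨ n = 146 := by
  have small : ∀ n < 354, (n = 84 ∨ n = 140 ∨ n = 146) ∨ facsList 𝒮 n = [] ∨
      ∃ w ∈ facsList 𝒮 n, ∀ z ∈ facsList 𝒮 n, (∃ i, 0 < z i ∧ 0 < w i) ∨ z = w := by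
    decide +kernel
  exact (small n hn).resolve_right fun h => not_isBetti_of_center_mem_facsList gens_pos h hb

theorem setOf_isBetti : {n | IsBetti 𝒮 n} = {84, 140, 146} := by
  ext n
  constructor
  · intro hb
    exact eq_of_isBetti_of_lt_354 (not_le.1 fun hn => not_isBetti_of_354_le hn hb) hb
  · rintro (rfl | rfl | rfl) <;> exact isBetti_of_isolated_mem_facsList gens_pos (by decide +kernel)

theorem stmt11 :
    lengthSet ![20, 28, 42, 73] 202 = {4, 6, 7, 9} ∧
    LD ![20, 28, 42, 73] 202 = 3 / 5 ∧
    {n : ℕ | IsBetti ![20, 28, 42, 73] n} = {84, 140, 146} ∧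
    lengthSet ![20, 28, 42, 73] 84 = {2, 3} ∧
    lengthSet ![20, 28, 42, 73] 140 = {4, 5, 7} ∧
    lengthSet ![20, 28, 42, 73] 146 = {2, 4, 5} ∧
    ∀ b : ℕ, IsBetti ![20, 28, 42, 73] b →
      LD ![20, 28, 42, 73] 202 < LD ![20, 28, 42, 73] b := by
  refine ⟨lengthSet_202, LD_202, setOf_isBetti, lengthSet_84, lengthSet_140, lengthSet_146, ?_⟩
  intro b hb
  obtain rfl | rfl | rfl : b ∈ ({84, 140, 146} : Set ℕ) := setOf_isBetti ▸ hb
  all_goals norm_num [LD_202, LD_84, LD_140, LD_146]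
end LengthDensity
end

section
/- Let S = ⟨m, n_1, ..., n_{m-1}⟩ be a maximal embedding dimension numerical semigroup with multiplicity m, where n_i ≡ i (mod m). Let b be the smallest Betti element of S in its residue class k mod m. If k = 0 or gcd(k, m) = 1, then |L(b)| ≤ 2. -/
open Finset

namespace LengthDensity

/-!
Write `n_r` for the generator in the residue class `r ≢ 0 (mod m)`. Minimality of the generating
set makes `n_r` the least element of `S` in its class, and any element of that class with a
factorization of length at least two strictly larger. Hence each `n_i + n_j` is a Betti element:
`e_i + e_j` is an isolated factorization, and `n_i + n_j = n_r + c m` with `c ≥ 1` is another one.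
If a factorization of `b` splits into two parts of nonzero residue, the two parts bound such a Betti
element of the class of `b` from above, strictly unless both parts are single atoms; minimality of
`b` therefore makes both parts atoms. Splitting off one atom `n_i` with `i ≢ 0, b` shows that a
factorization containing it has length two; splitting off `n_k + n_k` with `k ≡ b` shows that
`n_k` occurs at most once when `2b ≢ 0`. The remaining factorizations, `c m` or `n_k + c m`, all
have the same length.
-/

lemma exists_eq_add_mul_of_modEq {a b m : ℕ} (h : a ≡ b [MOD m]) (hab : a ≤ b) :
    ∃ c, b = a + c * m := by
  obtain ⟨c, hc⟩ := (Nat.modEq_iff_dvd' hab).1 h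
  exact ⟨c, by rw [mul_comm, ← hc, Nat.add_sub_cancel' hab]⟩

lemma single_add_sub_single {ι : Type*} [DecidableEq ι] {v : ι → ℕ} {i : ι} {c : ℕ}
    (h : c ≤ v i) : Pi.single i c + (v - Pi.single i c) = v := by
  funext j
  rcases eq_or_ne j i with rfl | hj
  · simp [h]
  · simp [hj]

lemma dotProduct_eq_add_sub_single {ι : Type*} [Fintype ι] [DecidableEq ι] {v : ι → ℕ}
    {i : ι} {c : ℕ} (h : c ≤ v i) (g : ι → ℕ) :
    v ⬝ᵥ g = c * g i + (v - Pi.single i c) ⬝ᵥ g := by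
  conv_lhs => rw [← single_add_sub_single h]
  rw [add_dotProduct, single_dotProduct]

lemma sum_eq_add_sub_single {ι : Type*} [Fintype ι] [DecidableEq ι] {v : ι → ℕ} {i : ι}
    {c : ℕ} (h : c ≤ v i) : ∑ j, v j = c + ∑ j, (v - Pi.single i c : ι → ℕ) j := by
  conv_lhs => rw [← single_add_sub_single h]
  simp [Finset.sum_add_distrib]

lemma sum_le_dotProduct {ι : Type*} [Fintype ι] {v g : ι → ℕ} (hg : ∀ i, 0 < g i) :
    ∑ i, v i ≤ v ⬝ᵥ g :=
  Finset.sum_le_sum fun i _ => Nat.le_mul_of_pos_right _ (hg i)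

lemma ncard_le_two_of_subsingleton_sdiff {α : Type*} {s : Set α} (a : α)
    (h : (s \ {a}).Subsingleton) : s.ncard ≤ 2 :=
  calc s.ncard ≤ (insert a (s \ {a})).ncard :=
        Set.ncard_le_ncard (Set.subset_insert_sdiff_singleton a s) (h.finite.insert a)
    _ ≤ (s \ {a}).ncard + 1 := Set.ncard_insert_le a _
    _ ≤ 2 := by
        have : (s \ {a}).ncard ≤ 1 := (Set.ncard_le_one h.finite).2 fun x hx y hy => h hx hy
        omega

lemma natCast_val_ne_zero {m : ℕ} [NeZero m] {i : Fin m} (hi : i ≠ 0) :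
    ((i : ℕ) : ZMod m) ≠ 0 := by
  rw [Ne, ZMod.natCast_eq_zero_iff]
  exact fun h => hi (Fin.ext (Nat.eq_zero_of_dvd_of_lt h i.isLt))

lemma natCast_val_inj {m : ℕ} {i j : Fin m} : ((i : ℕ) : ZMod m) = (j : ℕ) ↔ i = j := by
  rw [ZMod.natCast_eq_natCast_iff', Nat.mod_eq_of_lt i.isLt, Nat.mod_eq_of_lt j.isLt, Fin.val_inj]

lemma two_mul_natCast_ne_zero {m K : ℕ} (hm : 3 ≤ m) (hK : K.Coprime m) :
    2 * (K : ZMod m) ≠ 0 := by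
  have h2 : (2 : ZMod m) ≠ 0 := fun h => by
    have := Nat.le_of_dvd two_pos ((ZMod.natCast_eq_zero_iff 2 m).1 (by exact_mod_cast h))
    omega
  exact fun h => h2 (((ZMod.isUnit_iff_coprime K m).2 hK).mul_left_eq_zero.1 h)

def IsBettiMinorant {m : ℕ} (g : Fin m → ℕ) (b : ℕ) : Prop :=
  ∀ b', IsBetti g b' → (b' : ZMod m) = b → b ≤ b'

/-- `g` lists the minimal generators `g 0 = m` and `g i = n_i` of a numerical semigroup of
maximal embedding dimension and multiplicity `m`. -/
structure IsMEDGenerators {m : ℕ} [NeZero m] (g : Fin m → ℕ) : Prop where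
  apply_zero : g 0 = m
  apply_mod : ∀ i, g i % m = i
  isMinGen : IsMinGen g

namespace IsMEDGenerators

variable {m : ℕ} [NeZero m] {g : Fin m → ℕ}

lemma pos (hg : IsMEDGenerators g) (i : Fin m) : 0 < g i := by
  rcases eq_or_ne i 0 with rfl | hi
  · rw [hg.apply_zero]; exact NeZero.pos m
  · refine Nat.pos_of_ne_zero fun h => hi (Fin.ext ?_)
    rw [← hg.apply_mod i, h, Nat.zero_mod, Fin.val_zero]

lemma modEq_apply (hg : IsMEDGenerators g) {x : ℕ} {r : Fin m} (hr : x % m = r) :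
    x ≡ g r [MOD m] := by
  rw [Nat.ModEq, hr, hg.apply_mod]

lemma natCast_apply (hg : IsMEDGenerators g) (i : Fin m) : (g i : ZMod m) = (i : ℕ) :=
  (ZMod.natCast_eq_natCast_iff _ _ _).2 (hg.modEq_apply (Nat.mod_eq_of_lt i.isLt)).symm

lemma lt_dotProduct_of_apply_eq_zero (hg : IsMEDGenerators g) {w : Fin m → ℕ} {r : Fin m}
    (hr : w ⬝ᵥ g % m = r) (hpos : 0 < w ⬝ᵥ g) (hwr : w r = 0) : g r < w ⬝ᵥ g := by
  -- Otherwise `g r = w ⬝ᵥ g + c * m` expresses `g r` through the other generators.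
  by_contra! hle
  obtain ⟨c, hc⟩ := exists_eq_add_mul_of_modEq (hg.modEq_apply hr) hle
  have hcr : (Pi.single 0 c : Fin m → ℕ) r = 0 := by
    rcases eq_or_ne r 0 with rfl | hr0
    · obtain rfl : c = 0 := by
        rw [hg.apply_zero] at hc
        by_contra! hc0
        have := Nat.le_mul_of_pos_left m (Nat.pos_of_ne_zero hc0)
        omega
      simp
    · simp [hr0]
  refine hg.isMinGen r ⟨w + (Pi.single 0 c : Fin m → ℕ), by simp [hwr, hcr], ?_⟩
  change (w + Pi.single 0 c) ⬝ᵥ g = g r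
  rw [add_dotProduct, single_dotProduct, hg.apply_zero, hc]

lemma le_dotProduct (hg : IsMEDGenerators g) {w : Fin m → ℕ} {r : Fin m}
    (hr : w ⬝ᵥ g % m = r) (hpos : 0 < w ⬝ᵥ g) : g r ≤ w ⬝ᵥ g := by
  rcases Nat.eq_zero_or_pos (w r) with h | h
  · exact (hg.lt_dotProduct_of_apply_eq_zero hr hpos h).le
  · calc g r ≤ w r * g r := Nat.le_mul_of_pos_left _ h
      _ ≤ w ⬝ᵥ g := Finset.single_le_sum (f := fun i => w i * g i) (by simp) (mem_univ r)

lemma lt_dotProduct (hg : IsMEDGenerators g) {w : Fin m → ℕ} {r : Fin m}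
    (hr : w ⬝ᵥ g % m = r) (hw : 2 ≤ ∑ i, w i) : g r < w ⬝ᵥ g := by
  have hpos : 0 < w ⬝ᵥ g := by have := sum_le_dotProduct (v := w) hg.pos; omega
  rcases Nat.eq_zero_or_pos (w r) with h | h
  · exact hg.lt_dotProduct_of_apply_eq_zero hr hpos h
  · rw [sum_eq_add_sub_single (c := 1) h] at hw
    rw [dotProduct_eq_add_sub_single (c := 1) h]
    have := sum_le_dotProduct (v := w - Pi.single r 1) hg.pos
    omega

lemma eq_single_of_dotProduct_eq (hg : IsMEDGenerators g) {w : Fin m → ℕ} {q : Fin m}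
    (hw : w ⬝ᵥ g = g q) : w = Pi.single q 1 := by
  have hwq : 0 < w q := by
    by_contra! h
    have := hg.lt_dotProduct_of_apply_eq_zero (r := q) (by rw [hw, hg.apply_mod])
      (hw ▸ hg.pos q) (by omega)
    omega
  rw [dotProduct_eq_add_sub_single (c := 1) hwq] at hw
  have hrest : ∑ i, (w - Pi.single q 1 : Fin m → ℕ) i = 0 := by
    have := sum_le_dotProduct (v := w - Pi.single q 1) hg.pos
    omega
  rw [← single_add_sub_single (c := 1) hwq, show (w - Pi.single q 1 : Fin m → ℕ) = 0 from
    funext fun i => Finset.sum_eq_zero_iff.1 hrest i (mem_univ i), add_zero]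

lemma eq_of_dotProduct_eq_add (hg : IsMEDGenerators g) {w : Fin m → ℕ} {p q : Fin m}
    (hw : w ⬝ᵥ g = g p + g q) (hp : 0 < w p) : w = Pi.single p 1 + Pi.single q 1 := by
  rw [dotProduct_eq_add_sub_single (c := 1) hp] at hw
  rw [← single_add_sub_single (c := 1) hp,
    hg.eq_single_of_dotProduct_eq (w := w - Pi.single p 1) (q := q) (by omega)]

lemma isBetti_add (hg : IsMEDGenerators g) {p q : Fin m} (hp : p ≠ 0) (hq : q ≠ 0) :
    IsBetti g (g p + g q) := by
  set z₁ : Fin m → ℕ := Pi.single p 1 + Pi.single q 1 with hz₁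
  have hz₁g : z₁ ⬝ᵥ g = g p + g q := by simp [z₁, add_dotProduct]
  set r : Fin m := ⟨(g p + g q) % m, Nat.mod_lt _ (NeZero.pos m)⟩
  have hlt : g r < g p + g q :=
    hz₁g ▸ hg.lt_dotProduct (hz₁g ▸ rfl) (by simp [z₁, Finset.sum_add_distrib])
  obtain ⟨c, hc⟩ := exists_eq_add_mul_of_modEq (hg.modEq_apply (r := r) rfl).symm hlt.le
  have hisolated : ∀ w, Relation.ReflTransGen (adj g (g p + g q)) z₁ w → w = z₁ := by
    intro w h
    induction h with
    | refl => rfl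
    | tail _ hadj ih =>
      subst ih
      obtain ⟨-, hw, i, hi, hwi⟩ := hadj
      rcases (show i = p ∨ i = q by by_contra! h; simp [z₁, h.1, h.2] at hi) with rfl | rfl
      · exact hg.eq_of_dotProduct_eq_add hw hwi
      · rw [hz₁, add_comm]
        exact hg.eq_of_dotProduct_eq_add (hw.trans (add_comm _ _)) hwi
  refine ⟨z₁, hz₁g, Pi.single r 1 + Pi.single 0 c, ?_, fun h => ?_⟩
  · change (_ : Fin m → ℕ) ⬝ᵥ g = _
    simp [add_dotProduct, hg.apply_zero, hc]
  · obtain ⟨-, rfl⟩ : _ ∧ c = 0 := by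
      simpa [z₁, hp.symm, hq.symm] using congrFun (hisolated _ h) 0
    omega

variable {b : ℕ}

lemma sum_le_one_of_add_eq (hg : IsMEDGenerators g) (hb : IsBettiMinorant g b)
    {z₁ z₂ : Fin m → ℕ} (hz : (z₁ + z₂) ⬝ᵥ g = b) (h₁ : ((z₁ ⬝ᵥ g : ℕ) : ZMod m) ≠ 0)
    (h₂ : ((z₂ ⬝ᵥ g : ℕ) : ZMod m) ≠ 0) : ∑ i, z₁ i ≤ 1 := by
  by_contra! hlen
  set r₁ : Fin m := ⟨z₁ ⬝ᵥ g % m, Nat.mod_lt _ (NeZero.pos m)⟩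
  set r₂ : Fin m := ⟨z₂ ⬝ᵥ g % m, Nat.mod_lt _ (NeZero.pos m)⟩
  have hr₁ : r₁ ≠ 0 := by
    simpa [r₁, Fin.ext_iff, ← Nat.dvd_iff_mod_eq_zero, ZMod.natCast_eq_zero_iff] using h₁
  have hr₂ : r₂ ≠ 0 := by
    simpa [r₂, Fin.ext_iff, ← Nat.dvd_iff_mod_eq_zero, ZMod.natCast_eq_zero_iff] using h₂
  have hx₁ : g r₁ < z₁ ⬝ᵥ g := hg.lt_dotProduct rfl hlen
  have hx₂ : g r₂ ≤ z₂ ⬝ᵥ g :=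
    hg.le_dotProduct rfl (Nat.pos_of_ne_zero fun h => by simp [h] at h₂)
  have hres : ((g r₁ + g r₂ : ℕ) : ZMod m) = b := by
    rw [← hz, add_dotProduct, Nat.cast_add, Nat.cast_add,
      (ZMod.natCast_eq_natCast_iff _ _ _).2 (hg.modEq_apply (r := r₁) rfl),
      (ZMod.natCast_eq_natCast_iff _ _ _).2 (hg.modEq_apply (r := r₂) rfl)]
  have := hb _ (hg.isBetti_add hr₁ hr₂) hres
  rw [add_dotProduct] at hz
  omega

lemma apply_eq_zero_of_sum_ne_two (hg : IsMEDGenerators g) (hb : IsBettiMinorant g b)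
    {z : Fin m → ℕ} (hz : z ⬝ᵥ g = b) (hlen : ∑ j, z j ≠ 2) {k : Fin m}
    (hk : ((k : ℕ) : ZMod m) = b) {i : Fin m} (hi : i ≠ 0) (hik : i ≠ k) : z i = 0 := by
  by_contra! hzi
  replace hzi : 1 ≤ z i := Nat.pos_of_ne_zero hzi
  have h₁ : ((Pi.single i 1 ⬝ᵥ g : ℕ) : ZMod m) ≠ 0 := by
    rw [single_dotProduct, one_mul, hg.natCast_apply]
    exact natCast_val_ne_zero hi
  have h₂ : (((z - Pi.single i 1) ⬝ᵥ g : ℕ) : ZMod m) ≠ 0 := by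
    intro h
    refine hik (natCast_val_inj.1 ?_)
    rw [hk, ← hz, dotProduct_eq_add_sub_single hzi, Nat.cast_add, h, add_zero, one_mul,
      hg.natCast_apply]
  have hle := hg.sum_le_one_of_add_eq hb
    (by rwa [add_comm, single_add_sub_single hzi]) h₂ h₁
  have hpos : ∑ j, (z - Pi.single i 1 : Fin m → ℕ) j ≠ 0 := fun h => h₂ <| by
    rw [show (z - Pi.single i 1 : Fin m → ℕ) = 0 from
      funext fun j => Finset.sum_eq_zero_iff.1 h j (mem_univ j)]
    simp
  rw [sum_eq_add_sub_single hzi] at hlen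
  omega

lemma apply_le_one (hg : IsMEDGenerators g) (hb : IsBettiMinorant g b)
    {z : Fin m → ℕ} (hz : z ⬝ᵥ g = b) {k : Fin m} (hk : ((k : ℕ) : ZMod m) = b)
    (h2b : 2 * (b : ZMod m) ≠ 0) : z k ≤ 1 := by
  by_contra! hzk
  have h₁ : ((Pi.single k 2 ⬝ᵥ g : ℕ) : ZMod m) ≠ 0 := by
    rwa [single_dotProduct, Nat.cast_mul, hg.natCast_apply, hk, Nat.cast_ofNat]
  have h₂ : (((z - Pi.single k 2) ⬝ᵥ g : ℕ) : ZMod m) ≠ 0 := by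
    intro h
    have hb2 : (b : ZMod m) = 2 * b := by
      conv_lhs => rw [← hz, dotProduct_eq_add_sub_single (c := 2) hzk, Nat.cast_add, h, add_zero,
        Nat.cast_mul, hg.natCast_apply, hk, Nat.cast_ofNat]
    exact h2b (by linear_combination -2 * hb2)
  have := hg.sum_le_one_of_add_eq hb (by rwa [single_add_sub_single (c := 2) hzk]) h₁ h₂
  simp at this

lemma sum_mul_eq_of_sum_ne_two (hg : IsMEDGenerators g) (hb : IsBettiMinorant g b)
    (hb0 : (b : ZMod m) = 0) {z : Fin m → ℕ} (hz : z ⬝ᵥ g = b) (hlen : ∑ i, z i ≠ 2) :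
    (∑ i, z i) * m = b := by
  have hz0 : ∀ i, i ≠ 0 → z i = 0 := fun i hi =>
    hg.apply_eq_zero_of_sum_ne_two hb hz hlen (k := 0) (by rw [hb0, Fin.val_zero, Nat.cast_zero])
      hi hi
  rw [← hz, dotProduct, Fintype.sum_eq_single 0 hz0,
    Fintype.sum_eq_single (f := fun i => z i * g i) 0 fun i hi => by simp [hz0 i hi],
    hg.apply_zero]

lemma sum_mul_add_eq_of_sum_ne_two (hg : IsMEDGenerators g) (hb : IsBettiMinorant g b)
    (h2b : 2 * (b : ZMod m) ≠ 0) {k : Fin m} (hk : ((k : ℕ) : ZMod m) = b) (hk0 : k ≠ 0)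
    {z : Fin m → ℕ} (hz : z ⬝ᵥ g = b) (hlen : ∑ i, z i ≠ 2) :
    (∑ i, z i) * m + g k = b + m := by
  have hsupp : ∀ i, i ≠ 0 ∧ i ≠ k → z i = 0 := fun i hi =>
    hg.apply_eq_zero_of_sum_ne_two hb hz hlen hk hi.1 hi.2
  have hval : z 0 * m + z k * g k = b := by
    rw [← hz, dotProduct, Fintype.sum_eq_add 0 k hk0.symm fun i hi => by simp [hsupp i hi],
      hg.apply_zero]
  have hzk : z k = 1 := by
    have hzk0 : z k ≠ 0 := fun h0 => h2b <| by
      rw [← hval, h0, zero_mul, add_zero, Nat.cast_mul, ZMod.natCast_self, mul_zero, mul_zero]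
    have := hg.apply_le_one hb hz hk h2b
    omega
  rw [Fintype.sum_eq_add 0 k hk0.symm hsupp, hzk, ← hval, hzk]
  ring

lemma ncard_lengthSet_le_two (hg : IsMEDGenerators g) (hb : IsBettiMinorant g b)
    (hb2 : (b : ZMod m) = 0 ∨ 2 * (b : ZMod m) ≠ 0) : (lengthSet g b).ncard ≤ 2 := by
  refine ncard_le_two_of_subsingleton_sdiff 2 ?_
  rintro _ ⟨⟨z, hz, rfl⟩, hz2⟩ _ ⟨⟨z', hz', rfl⟩, hz2'⟩
  refine Nat.eq_of_mul_eq_mul_right (NeZero.pos m) ?_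
  rcases hb2 with hb0 | h2b
  · exact (hg.sum_mul_eq_of_sum_ne_two hb hb0 hz hz2).trans
      (hg.sum_mul_eq_of_sum_ne_two hb hb0 hz' hz2').symm
  · set k : Fin m := ⟨b % m, Nat.mod_lt _ (NeZero.pos m)⟩
    have hk : ((k : ℕ) : ZMod m) = b := ZMod.natCast_mod b m
    have hk0 : k ≠ 0 := fun h => h2b <| by rw [← hk, h, Fin.val_zero, Nat.cast_zero, mul_zero]
    exact Nat.add_right_cancel ((hg.sum_mul_add_eq_of_sum_ne_two hb h2b hk hk0 hz hz2).trans
      (hg.sum_mul_add_eq_of_sum_ne_two hb h2b hk hk0 hz' hz2').symm)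

end IsMEDGenerators

theorem stmt12 (m : ℕ) (hm : 3 ≤ m) (g : Fin m → ℕ)
    (hg0 : g ⟨0, by omega⟩ = m)
    (hmod : ∀ i : Fin m, g i % m = (i : ℕ))
    (hmin : IsMinGen g)
    (K : ℕ) (b : ℕ)
    (hbK : b % m = K)
    (hsmall : ∀ b' : ℕ, IsBetti g b' → b' % m = K → b ≤ b')
    (hcase : K = 0 ∨ Nat.Coprime K m) :
    (lengthSet g b).ncard ≤ 2 := by
  have : NeZero m := ⟨by omega⟩
  have hbK' : (b : ZMod m) = K := by rw [← hbK, ZMod.natCast_mod]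
  refine IsMEDGenerators.ncard_lengthSet_le_two ⟨hg0, hmod, hmin⟩
    (fun b' hb' hres => hsmall b' hb' ?_) ?_
  · rw [← hbK]
    exact (ZMod.natCast_eq_natCast_iff' _ _ _).1 hres
  · rw [hbK']
    rcases hcase with rfl | hcop
    · exact Or.inl Nat.cast_zero
    · exact Or.inr (two_mul_natCast_ne_zero hm hcop)
end LengthDensity
end
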